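/- Let SP_9 be the 2-edge-coloured complete graph on vertex set {0,...,8} where the positive edges form a copy of K_3 □ K_3 and all other edges are negative. Then SP_9 is isomorphic (as a 2-edge-coloured graph) to the 2-edge-coloured graph obtained from SP_9 by switching the sign of every edge. -/

import Mathlib

/-- Vertices of `SP_9`, identified with `{0,1,2} × {0,1,2}`. -/
abbrev V9 : Type := Fin 3 × Fin 3

/-- The edge `uv` of `SP_9` is positive: `u ≠ v` and they agree in exactly one coordinate. -/
abbrev pos9 (u v : V9) : Prop :=
  (u.1 = v.1 ∧ u.2 ≠ v.2) ∨ (u.1 ≠ v.1 ∧ u.2 = v.2)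

/-- The edge `uv` of `SP_9` is negative: `u ≠ v` and it is not positive. -/
abbrev neg9 (u v : V9) : Prop := u ≠ v ∧ ¬ pos9 u v

/-!
Over `𝔽₃`, the edge `uv` of `SP_9` is positive exactly when `u - v` is a nonzero vector on a
coordinate axis. The linear map `(a, b) ↦ (a + b, a - b)` is invertible over `𝔽₃` and sends the
axes onto the two diagonals and vice versa, because the nonzero elements of `𝔽₃` are `±1`; so it
sends positive edges exactly to negative ones.
-/

abbrev OnOneAxis (w : V9) : Prop := Xor (w.1 = 0) (w.2 = 0)

lemma pos9_iff_onOneAxis_sub (u v : V9) : pos9 u v ↔ OnOneAxis (u - v) := by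
  simp only [pos9, OnOneAxis, Xor, Prod.fst_sub, Prod.snd_sub, sub_eq_zero]
  tauto

/-- The map with matrix `!![1, 1; 1, -1]`, whose inverse over `𝔽₃` is `2 • !![1, 1; 1, -1]`. -/
def sumDiff : V9 ≃+ V9 where
  toFun p := (p.1 + p.2, p.1 - p.2)
  invFun p := (2 * (p.1 + p.2), 2 * (p.1 - p.2))
  left_inv := by decide
  right_inv := by decide
  map_add' u v := Prod.ext (add_add_add_comm ..) (add_sub_add_comm ..)

lemma onOneAxis_iff_not_onOneAxis_sumDiff (w : V9) (hw : w ≠ 0) :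
    OnOneAxis w ↔ ¬ OnOneAxis (sumDiff w) := by
  revert w
  decide

theorem sp9_iso_switch :
    ∃ φ : V9 ≃ V9, ∀ u v : V9, u ≠ v → (pos9 u v ↔ ¬ pos9 (φ u) (φ v)) := by
  refine ⟨sumDiff.toEquiv, fun u v huv => ?_⟩
  rw [pos9_iff_onOneAxis_sub, pos9_iff_onOneAxis_sub, AddEquiv.toEquiv_eq_coe, EquivLike.coe_coe,
    ← map_sub]
  exact onOneAxis_iff_not_onOneAxis_sumDiff _ (sub_ne_zero.mpr huv)
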